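/- arXiv:1806.05957 — 3 statements merged into one kernel-verified Lean document; each statement's English description precedes it below -/
import Mathlib

section
/- Let F : ℂ → Matrix (Fin n) (Fin n) ℂ be analytic. Let y₁ be a left eigenvector for eigenvalue λ₁ (y₁ᴴF(λ₁)=0) and x₂ a right eigenvector for eigenvalue λ₂ ≠ λ₁ (F(λ₂)x₂=0). For vectors w, scalars φ, and ε ∈ ℂ, set θ = λ₂ + εφ and v = x₂ + εw. Then y₁ᴴ F[λ₁,θ] v = C·ε·(y₁ᴴ F'(λ₁) x₁) + O(ε²) as ε → 0, where C = (y₁ᴴ F(λ₂) w + φ · y₁ᴴ F'(λ₂) x₂)/((λ₂−λ₁)(y₁ᴴF'(λ₁)x₁)), provided y₁ᴴ F'(λ₁) x₁ ≠ 0. Equivalently, y₁ᴴ(F(λ₁) − F(θ))v = −(y₁ᴴF(λ₂)w + φ y₁ᴴF'(λ₂)x₂)ε + O(ε²). -/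
/-!
Put `g ε = y₁ᴴ F(λ₂ + εφ) (x₂ + εw)`. Because `y₁ᴴ F(λ₁) = 0`, the quantity
`y₁ᴴ (F(λ₁) − F(θ)) v` equals `−g ε`. Entrywise analyticity makes `g` analytic, with
`g 0 = y₁ᴴ F(λ₂) x₂ = 0` and `g' 0 = y₁ᴴ F(λ₂) w + φ y₁ᴴ F'(λ₂) x₂`, so the second-order Taylor
estimate of `g` is the second claim. For the divided difference, `θ − λ₁ = (λ₂ − λ₁) + εφ` stays
away from `0`, so dividing `g` by it keeps an `O(ε²)` remainder and divides the linear term by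
`λ₂ − λ₁`.
-/

open Matrix Filter Asymptotics Topology

theorem AnalyticAt.isBigO_sub_sub_smul {𝕜 E : Type*} [NontriviallyNormedField 𝕜]
    [NormedAddCommGroup E] [NormedSpace 𝕜 E] {f : 𝕜 → E} {f' : E} {x : 𝕜}
    (hf : AnalyticAt 𝕜 f x) (hf' : HasDerivAt f f' x) :
    (fun ε => f (x + ε) - f x - ε • f') =O[𝓝 0] fun ε => ε ^ 2 := by
  obtain ⟨p, hp⟩ := hf
  have hpartial (ε : 𝕜) : p.partialSum 2 ε = f x + ε • f' := by
    rw [← hp.hasDerivAt.unique hf', ← hp.coeff_zero (fun _ => ε)]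
    simp [FormalMultilinearSeries.partialSum, Finset.sum_range_succ]
  have hTaylor := hp.isBigO_sub_partialSum_pow 2
  simp only [hpartial, ← norm_pow] at hTaylor
  simpa only [sub_sub] using hTaylor.of_norm_right

section

variable {𝕜 : Type*} [NontriviallyNormedField 𝕜] {m n : Type*} [Fintype m] [Fintype n]

theorem HasDerivAt.dotProduct_mulVec {A : 𝕜 → Matrix m n 𝕜} {A' : Matrix m n 𝕜}
    {v : 𝕜 → n → 𝕜} {v' : n → 𝕜} {z : 𝕜} (u : m → 𝕜)
    (hA : ∀ i j, HasDerivAt (fun t => A t i j) (A' i j) z)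
    (hv : ∀ j, HasDerivAt (fun t => v t j) (v' j) z) :
    HasDerivAt (fun t => u ⬝ᵥ A t *ᵥ v t) (u ⬝ᵥ A' *ᵥ v z + u ⬝ᵥ A z *ᵥ v') z := by
  simp only [dotProduct, mulVec, ← Finset.sum_add_distrib, ← mul_add]
  exact HasDerivAt.fun_sum fun i _ => HasDerivAt.const_mul _ <| by
    simpa only [Finset.sum_add_distrib] using HasDerivAt.fun_sum fun j _ => (hA i j).fun_mul (hv j)

theorem AnalyticAt.dotProduct_mulVec {A : 𝕜 → Matrix m n 𝕜} {v : 𝕜 → n → 𝕜} {z : 𝕜}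
    (u : m → 𝕜) (hA : ∀ i j, AnalyticAt 𝕜 (fun t => A t i j) z)
    (hv : ∀ j, AnalyticAt 𝕜 (fun t => v t j) z) :
    AnalyticAt 𝕜 (fun t => u ⬝ᵥ A t *ᵥ v t) z := by
  simp only [dotProduct, mulVec]
  exact Finset.analyticAt_fun_sum _ fun i _ => analyticAt_const.mul <|
    Finset.analyticAt_fun_sum _ fun j _ => (hA i j).fun_mul (hv j)

theorem isBigO_dotProduct_mulVec_perturbation {F : 𝕜 → Matrix m n 𝕜} {F' : Matrix m n 𝕜}
    {lam phi : 𝕜} (hF : ∀ i j, AnalyticAt 𝕜 (fun t => F t i j) lam)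
    (hF' : ∀ i j, HasDerivAt (fun t => F t i j) (F' i j) lam) (u : m → 𝕜) (x w : n → 𝕜) :
    (fun ε => u ⬝ᵥ F (lam + ε * phi) *ᵥ (x + ε • w) - u ⬝ᵥ F lam *ᵥ x -
        (u ⬝ᵥ F lam *ᵥ w + phi * (u ⬝ᵥ F' *ᵥ x)) * ε) =O[𝓝 0] fun ε => ε ^ 2 := by
  have hline : HasDerivAt (fun ε : 𝕜 => lam + ε * phi) phi 0 := by
    simpa using ((hasDerivAt_id (0 : 𝕜)).mul_const phi).const_add lam
  have hA (i j) : HasDerivAt (fun ε => F (lam + ε * phi) i j) ((phi • F') i j) 0 := by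
    simpa [Function.comp_def, mul_comm] using HasDerivAt.comp_of_eq 0 (hF' i j) hline (by simp)
  have hv (j) : HasDerivAt (fun ε : 𝕜 => (x + ε • w) j) (w j) 0 := by
    simpa using ((hasDerivAt_id (0 : 𝕜)).mul_const (w j)).const_add (x j)
  have hAa (i j) : AnalyticAt 𝕜 (fun ε => F (lam + ε * phi) i j) 0 :=
    (hF i j).comp_of_eq (by fun_prop) (by simp)
  have hva (j) : AnalyticAt 𝕜 (fun ε : 𝕜 => (x + ε • w) j) 0 := by
    simp only [Pi.add_apply, Pi.smul_apply, smul_eq_mul]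
    fun_prop
  have hTaylor := (AnalyticAt.dotProduct_mulVec u hAa hva).isBigO_sub_sub_smul
    (HasDerivAt.dotProduct_mulVec u hA hv)
  simpa [smul_mulVec, add_comm, mul_comm] using hTaylor

end

theorem Asymptotics.IsBigO.div_add_mul_sub {𝕜 : Type*} [NontriviallyNormedField 𝕜]
    {g : 𝕜 → 𝕜} {a b c : 𝕜} (ha : a ≠ 0)
    (hg : (fun ε => g ε - c * ε) =O[𝓝 0] fun ε => ε ^ 2) :
    (fun ε => g ε / (a + ε * b) - c / a * ε) =O[𝓝 0] fun ε => ε ^ 2 := by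
  have hden : Tendsto (fun ε : 𝕜 => a + ε * b) (𝓝 0) (𝓝 a) := by
    simpa using ((continuous_id.mul continuous_const).const_add a).tendsto (0 : 𝕜)
  have hnum : (fun ε => a * (g ε - c * ε) - c * b * ε ^ 2) =O[𝓝 0] fun ε => ε ^ 2 :=
    (hg.const_mul_left a).sub ((isBigO_refl _ _).const_mul_left (c * b))
  have hinv : (fun ε => (a * (a + ε * b))⁻¹) =O[𝓝 0] fun _ => (1 : 𝕜) :=
    ((tendsto_const_nhds.mul hden).inv₀ (mul_ne_zero ha ha)).isBigO_one 𝕜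
  have hquot := hnum.mul hinv
  simp only [mul_one] at hquot
  refine hquot.congr' ?_ EventuallyEq.rfl
  filter_upwards [hden.eventually_ne ha] with ε hε
  field_simp
  ring

theorem stmt_3_general (n : ℕ) (F F' : ℂ → Matrix (Fin n) (Fin n) ℂ)
    (hF : ∀ (z : ℂ) (i j : Fin n), AnalyticAt ℂ (fun t => F t i j) z)
    (hF' : ∀ (z : ℂ) (i j : Fin n), HasDerivAt (fun t => F t i j) (F' z i j) z)
    (lam1 lam2 : ℂ) (hne : lam2 ≠ lam1)
    (y1 x1 x2 w : Fin n → ℂ) (phi : ℂ)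
    (hly : Matrix.vecMul (star y1) (F lam1) = 0)
    (hrx2 : (F lam2).mulVec x2 = 0) :
    (fun ε : ℂ =>
        star y1 ⬝ᵥ
            ((lam1 - (lam2 + ε * phi))⁻¹ • (F lam1 - F (lam2 + ε * phi))).mulVec
              (x2 + ε • w) / (star y1 ⬝ᵥ (F' lam1).mulVec x1) -
          (star y1 ⬝ᵥ (F lam2).mulVec w + phi * (star y1 ⬝ᵥ (F' lam2).mulVec x2)) /
              ((lam2 - lam1) * (star y1 ⬝ᵥ (F' lam1).mulVec x1)) * ε)
      =O[nhds (0 : ℂ)] (fun ε => ε ^ 2) ∧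
    (fun ε : ℂ =>
        star y1 ⬝ᵥ (F lam1 - F (lam2 + ε * phi)).mulVec (x2 + ε • w) +
          (star y1 ⬝ᵥ (F lam2).mulVec w + phi * (star y1 ⬝ᵥ (F' lam2).mulVec x2)) * ε)
      =O[nhds (0 : ℂ)] (fun ε => ε ^ 2) := by
  set c := star y1 ⬝ᵥ F lam2 *ᵥ w + phi * (star y1 ⬝ᵥ F' lam2 *ᵥ x2)
  set g := fun ε : ℂ => star y1 ⬝ᵥ F (lam2 + ε * phi) *ᵥ (x2 + ε • w)
  have hg : (fun ε => g ε - c * ε) =O[𝓝 0] fun ε => ε ^ 2 := by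
    simpa [hrx2] using isBigO_dotProduct_mulVec_perturbation (hF lam2) (hF' lam2) (star y1) x2 w
  have hsplit (ε : ℂ) : star y1 ⬝ᵥ (F lam1 - F (lam2 + ε * phi)) *ᵥ (x2 + ε • w) = -g ε := by
    rw [sub_mulVec, dotProduct_sub, dotProduct_mulVec, hly, zero_dotProduct, zero_sub]
  constructor
  · refine ((hg.div_add_mul_sub (b := phi) (sub_ne_zero.2 hne)).const_mul_left
      (star y1 ⬝ᵥ F' lam1 *ᵥ x1)⁻¹).congr_left fun ε => ?_
    rw [smul_mulVec, dotProduct_smul, smul_eq_mul, hsplit,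
      show lam1 - (lam2 + ε * phi) = -(lam2 - lam1 + ε * phi) by ring, inv_neg, ← div_div]
    ring
  · simpa [hsplit, neg_add_eq_sub] using hg.neg_left

theorem stmt_3 (n : ℕ) (F F' : ℂ → Matrix (Fin n) (Fin n) ℂ)
    (hF : ∀ (z : ℂ) (i j : Fin n), AnalyticAt ℂ (fun t => F t i j) z)
    (hF' : ∀ (z : ℂ) (i j : Fin n), HasDerivAt (fun t => F t i j) (F' z i j) z)
    (lam1 lam2 : ℂ) (hne : lam2 ≠ lam1)
    (y1 x1 x2 w : Fin n → ℂ) (phi : ℂ)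
    (hy1 : y1 ≠ 0) (hx1 : x1 ≠ 0) (hx2 : x2 ≠ 0)
    (hly : Matrix.vecMul (star y1) (F lam1) = 0)
    (hrx1 : (F lam1).mulVec x1 = 0)
    (hrx2 : (F lam2).mulVec x2 = 0)
    (hsimple : star y1 ⬝ᵥ (F' lam1).mulVec x1 ≠ 0) :
    (fun ε : ℂ =>
        star y1 ⬝ᵥ
            ((lam1 - (lam2 + ε * phi))⁻¹ • (F lam1 - F (lam2 + ε * phi))).mulVec
              (x2 + ε • w) / (star y1 ⬝ᵥ (F' lam1).mulVec x1) -
          (star y1 ⬝ᵥ (F lam2).mulVec w + phi * (star y1 ⬝ᵥ (F' lam2).mulVec x2)) /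
              ((lam2 - lam1) * (star y1 ⬝ᵥ (F' lam1).mulVec x1)) * ε)
      =O[nhds (0 : ℂ)] (fun ε => ε ^ 2) ∧
    (fun ε : ℂ =>
        star y1 ⬝ᵥ (F lam1 - F (lam2 + ε * phi)).mulVec (x2 + ε • w) +
          (star y1 ⬝ᵥ (F lam2).mulVec w + phi * (star y1 ⬝ᵥ (F' lam2).mulVec x2)) * ε)
      =O[nhds (0 : ℂ)] (fun ε => ε ^ 2) :=
  stmt_3_general n F F' hF hF' lam1 lam2 hne y1 x1 x2 w phi hly hrx2
end

section
/- Let α₁, β₁, α₂, β₂ ∈ ℂ with |α₁|²+|β₁|² = 1, α₁ ≠ 0, and set dα = α₂ − α₁, dβ = β₂ − β₁. Assume the orthogonality relation conj(α₁)dα + conj(β₁)dβ = 0, dβ ≠ 0, and α₁β₂ − α₂β₁ ≠ 0. Then (α₁ − α₂)/(α₁β₂ − α₂β₁) = conj(β₁) and (β₁ − β₂)/(α₁β₂ − α₂β₁) = −conj(α₁). -/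
/-!
Tangency says that the functional `(x, y) ↦ conj α₁ x + conj β₁ y`, which equals `1` at
`(α₁, β₁)` by the sphere condition, equals `1` at `(α₂, β₂)` as well. A linear functional
taking the value `1` at two points with nonzero determinant is recovered from them by
Cramer's rule, which gives both identities.
-/

theorem sub_div_det_eq_of_linear_eq_one {K : Type*} [Field K] {c d a1 b1 a2 b2 : K}
    (h1 : c * a1 + d * b1 = 1) (h2 : c * a2 + d * b2 = 1) (hdet : a1 * b2 - a2 * b1 ≠ 0) :
    (a1 - a2) / (a1 * b2 - a2 * b1) = d ∧ (b1 - b2) / (a1 * b2 - a2 * b1) = -c := by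
  constructor
  · rw [div_eq_iff hdet]
    linear_combination a2 * h1 - a1 * h2
  · rw [div_eq_iff hdet]
    linear_combination b2 * h1 - b1 * h2

theorem Complex.conj_mul_add_conj_mul_eq_one {a b : ℂ} (h : ‖a‖ ^ 2 + ‖b‖ ^ 2 = 1) :
    starRingEnd ℂ a * a + starRingEnd ℂ b * b = 1 := by
  simp only [Complex.conj_mul']
  exact_mod_cast h

theorem stmt_16_general (a1 b1 a2 b2 : ℂ)
    (h1 : ‖a1‖ ^ 2 + ‖b1‖ ^ 2 = 1)
    (horth : (starRingEnd ℂ) a1 * (a2 - a1) + (starRingEnd ℂ) b1 * (b2 - b1) = 0)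
    (hden : a1 * b2 - a2 * b1 ≠ 0) :
    (a1 - a2) / (a1 * b2 - a2 * b1) = (starRingEnd ℂ) b1 ∧
    (b1 - b2) / (a1 * b2 - a2 * b1) = -(starRingEnd ℂ) a1 := by
  have hsphere := Complex.conj_mul_add_conj_mul_eq_one h1
  exact sub_div_det_eq_of_linear_eq_one hsphere (by linear_combination hsphere + horth) hden

theorem stmt_16 (a1 b1 a2 b2 : ℂ)
    (h1 : ‖a1‖ ^ 2 + ‖b1‖ ^ 2 = 1) (ha1 : a1 ≠ 0)
    (horth : (starRingEnd ℂ) a1 * (a2 - a1) + (starRingEnd ℂ) b1 * (b2 - b1) = 0)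
    (hdb : b2 - b1 ≠ 0) (hden : a1 * b2 - a2 * b1 ≠ 0) :
    (a1 - a2) / (a1 * b2 - a2 * b1) = (starRingEnd ℂ) b1 ∧
    (b1 - b2) / (a1 * b2 - a2 * b1) = -(starRingEnd ℂ) a1 :=
  stmt_16_general a1 b1 a2 b2 h1 horth hden
end

section
/- Consider the nonlinear two-parameter divided difference: for matrix functions T₁, T₂ of (λ,μ), eigenvalues (λ₁,μ₁) ≠ (λ₂,μ₂) with λ₁ ≠ λ₂ and μ₁ ≠ μ₂, left eigenvectors y₁,y₂ for (λ₁,μ₁) and right eigenvectors x₁,x₂ for (λ₂,μ₂). Then the 2×2 determinant with entries a₁₁ = y₁ᴴ(T₁(λ₂,μ₁) − T₁(λ₁,μ₁))x₁/(λ₂−λ₁), a₁₂ = y₁ᴴ(T₁(λ₂,μ₂) − T₁(λ₂,μ₁))x₁/(μ₂−μ₁), a₂₁ = y₂ᴴ(T₂(λ₂,μ₁) − T₂(λ₁,μ₁))x₂/(λ₂−λ₁), a₂₂ = y₂ᴴ(T₂(λ₂,μ₂) − T₂(λ₂,μ₁))x₂/(μ₂−μ₁), i.e., a₁₁a₂₂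 − a₁₂a₂₁, equals zero. -/
open Matrix

theorem stmt_18 (n1 n2 : ℕ)
    (T1 : ℂ → ℂ → Matrix (Fin n1) (Fin n1) ℂ)
    (T2 : ℂ → ℂ → Matrix (Fin n2) (Fin n2) ℂ)
    (l1 m1 l2 m2 : ℂ) (hl : l1 ≠ l2) (hm : m1 ≠ m2)
    (y1 x1 : Fin n1 → ℂ) (y2 x2 : Fin n2 → ℂ)
    (hy10 : y1 ≠ 0) (hy20 : y2 ≠ 0) (hx10 : x1 ≠ 0) (hx20 : x2 ≠ 0)
    (hy1 : Matrix.vecMul (star y1) (T1 l1 m1) = 0)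
    (hy2 : Matrix.vecMul (star y2) (T2 l1 m1) = 0)
    (hx1 : (T1 l2 m2).mulVec x1 = 0)
    (hx2 : (T2 l2 m2).mulVec x2 = 0) :
    (star y1 ⬝ᵥ (T1 l2 m1 - T1 l1 m1).mulVec x1 / (l2 - l1)) *
        (star y2 ⬝ᵥ (T2 l2 m2 - T2 l2 m1).mulVec x2 / (m2 - m1)) -
      (star y1 ⬝ᵥ (T1 l2 m2 - T1 l2 m1).mulVec x1 / (m2 - m1)) *
        (star y2 ⬝ᵥ (T2 l2 m1 - T2 l1 m1).mulVec x2 / (l2 - l1)) = 0 := by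
  have e1 : star y1 ⬝ᵥ (T1 l1 m1).mulVec x1 = 0 := by
    rw [dotProduct_mulVec, hy1, zero_dotProduct]
  have e2 : star y2 ⬝ᵥ (T2 l1 m1).mulVec x2 = 0 := by
    rw [dotProduct_mulVec, hy2, zero_dotProduct]
  have f1 : star y1 ⬝ᵥ (T1 l2 m2).mulVec x1 = 0 := by
    rw [hx1, dotProduct_zero]
  have f2 : star y2 ⬝ᵥ (T2 l2 m2).mulVec x2 = 0 := by
    rw [hx2, dotProduct_zero]
  simp only [sub_mulVec, dotProduct_sub, e1, e2, f1, f2, sub_zero, zero_sub]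
  field_simp
  ring
end
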